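/- arXiv:1203.6140 — 3 statements merged into one kernel-verified Lean document; each statement's English description precedes it below -/
import Mathlib

section
/- Let α satisfy 1 < α < 2 and define f_α(x,y) := |x-y|^α + (x+y)^α - 2x^α for x ≥ 0 and y > 0. Then for each fixed y > 0, the function x ↦ f_α(x,y) is positive, strictly decreasing in x, and tends to 0 as x → ∞. -/
open Filter Set Real Topology

/-!
With `φ t = |t| ^ α`, the function is `φ (x - y) + φ (x + y) - 2 φ x` on `x ≥ 0`, with derivative
`ψ (x - y) + ψ (x + y) - 2 ψ x` where `ψ t = α · sign t · |t| ^ (α - 1)`. As `0 < α - 1 < 1`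
this is negative: for `x ≥ y` by strict concavity of `t ^ (α - 1)`, for `x < y` by its
subadditivity and `(2x) ^ (α - 1) < 2 x ^ (α - 1)`. For `x > y` the tangent-line (Bernoulli)
inequalities for the convex `t ^ α` and the concave `t ^ (α - 1)` squeeze the function between `0`
and `2α(α - 1) y² (x - y) ^ (α - 2)`, which tends to `0` because `α < 2`. Positivity then follows
from strict decrease towards the limit `0`.
-/

lemma rpow_sub_one_mul_sub_eq {a : ℝ} (ha : 0 < a) (p b : ℝ) :
    a ^ (p - 1) * (b - a) = a ^ p * (b / a - 1) := by
  rw [rpow_sub_one ha.ne']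
  field_simp

lemma mul_rpow_sub_one_mul_sub_le_rpow_sub_rpow {p a b : ℝ} (hp : 1 ≤ p) (ha : 0 < a)
    (hb : 0 ≤ b) : p * a ^ (p - 1) * (b - a) ≤ b ^ p - a ^ p := by
  have bernoulli := one_add_mul_self_le_rpow_one_add (s := b / a - 1)
    (by linarith [div_nonneg hb ha.le]) hp
  rw [add_sub_cancel, div_rpow hb ha.le, le_div_iff₀ (rpow_pos_of_pos ha p)] at bernoulli
  rw [mul_assoc, rpow_sub_one_mul_sub_eq ha]
  linarith

lemma rpow_sub_rpow_le_mul_rpow_sub_one_mul_sub {p a b : ℝ} (hp₀ : 0 ≤ p) (hp₁ : p ≤ 1)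
    (ha : 0 < a) (hb : 0 ≤ b) : b ^ p - a ^ p ≤ p * a ^ (p - 1) * (b - a) := by
  have bernoulli := rpow_one_add_le_one_add_mul_self (s := b / a - 1)
    (by linarith [div_nonneg hb ha.le]) hp₀ hp₁
  rw [add_sub_cancel, div_rpow hb ha.le, div_le_iff₀ (rpow_pos_of_pos ha p)] at bernoulli
  rw [mul_assoc, rpow_sub_one_mul_sub_eq ha]
  linarith

theorem StrictAntiOn.lt_of_tendsto_atTop {α β : Type*} [LinearOrder α] [NoMaxOrder α]
    [TopologicalSpace β] [Preorder β] [OrderClosedTopology β] {f : α → β} {a : α} {l : β}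
    (hf : StrictAntiOn f (Ici a)) (hl : Tendsto f atTop (𝓝 l)) {x : α} (hx : a ≤ x) :
    l < f x := by
  have : Nonempty α := ⟨x⟩
  obtain ⟨x', hxx'⟩ := exists_gt x
  have hlim : l ≤ f x' := le_of_tendsto hl <| (eventually_ge_atTop x').mono fun t ht =>
    hf.antitoneOn (hx.trans hxx'.le) (hx.trans (hxx'.le.trans ht)) ht
  exact hlim.trans_lt (hf hx (hx.trans hxx'.le) hxx')

noncomputable def rpowSecondDiff (α y x : ℝ) : ℝ := |x - y| ^ α + (x + y) ^ α - 2 * x ^ α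

section

variable {α y : ℝ}

lemma hasDerivAt_rpowSecondDiff (hα : 1 < α) (x : ℝ) :
    HasDerivAt (rpowSecondDiff α y)
      (α * (|x - y| ^ (α - 2) * (x - y) + (x + y) ^ (α - 1) - 2 * x ^ (α - 1))) x := by
  have h₁ := (hasDerivAt_abs_rpow (x - y) hα).comp x ((hasDerivAt_id x).sub_const y)
  have h₂ := ((hasDerivAt_id x).add_const y).rpow_const (p := α) (Or.inr hα.le)
  have h₃ := (hasDerivAt_rpow_const (x := x) (Or.inr hα.le)).const_mul 2
  refine ((h₁.add h₂).sub h₃).congr_deriv ?_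
  simp only [id]
  ring

lemma abs_rpow_sub_two_mul_add_rpow_sub_one_lt (hα₁ : 1 < α) (hα₂ : α < 2) {x : ℝ}
    (hx : 0 < x) (hy : 0 < y) :
    |x - y| ^ (α - 2) * (x - y) + (x + y) ^ (α - 1) < 2 * x ^ (α - 1) := by
  have habs : |x - y| ^ (α - 2) * |x - y| = |x - y| ^ (α - 1) := by
    rw [show α - 1 = α - 2 + 1 by ring, rpow_add_one' (abs_nonneg _) (by linarith)]
  rcases le_or_gt y x with hyx | hxy
  · rw [abs_of_nonneg (sub_nonneg.2 hyx)] at habs ⊢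
    have hmid := (strictConcaveOn_rpow (p := α - 1) (by linarith) (by linarith)).2
      (mem_Ici.2 (sub_nonneg.2 hyx)) (mem_Ici.2 (by linarith : 0 ≤ x + y))
      (by linarith : x - y ≠ x + y) one_half_pos one_half_pos (add_halves 1)
    simp only [smul_eq_mul, show 1 / 2 * (x - y) + 1 / 2 * (x + y) = x by ring] at hmid
    linarith
  · rw [abs_of_neg (sub_neg.2 hxy), neg_sub] at habs ⊢
    have hsub : (x + y) ^ (α - 1) ≤ (y - x) ^ (α - 1) + (2 * x) ^ (α - 1) := by
      rw [show x + y = (y - x) + 2 * x by ring]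
      exact rpow_add_le_add_rpow (by linarith) (by linarith) (by linarith) (by linarith)
    have htwo : (2 : ℝ) ^ (α - 1) < 2 := by
      simpa using rpow_lt_rpow_of_exponent_lt one_lt_two (by linarith : α - 1 < 1)
    rw [mul_rpow zero_le_two hx.le] at hsub
    have hxpos := rpow_pos_of_pos hx (α - 1)
    nlinarith

lemma strictAntiOn_rpowSecondDiff (hα₁ : 1 < α) (hα₂ : α < 2) (hy : 0 < y) :
    StrictAntiOn (rpowSecondDiff α y) (Ici 0) := by
  have hderiv := hasDerivAt_rpowSecondDiff (y := y) hα₁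
  refine strictAntiOn_of_hasDerivWithinAt_neg (convex_Ici 0)
    (fun x _ => (hderiv x).continuousAt.continuousWithinAt)
    (fun x _ => (hderiv x).hasDerivWithinAt) fun x hx => ?_
  rw [interior_Ici] at hx
  have := abs_rpow_sub_two_mul_add_rpow_sub_one_lt hα₁ hα₂ hx hy
  exact mul_neg_of_pos_of_neg (by linarith) (by linarith)

lemma rpowSecondDiff_nonneg (hα : 1 ≤ α) (hy : 0 < y) {x : ℝ} (hyx : y ≤ x) :
    0 ≤ rpowSecondDiff α y x := by
  have hx : 0 < x := hy.trans_le hyx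
  have h₁ := mul_rpow_sub_one_mul_sub_le_rpow_sub_rpow hα hx (b := x - y) (sub_nonneg.2 hyx)
  have h₂ := mul_rpow_sub_one_mul_sub_le_rpow_sub_rpow hα hx (b := x + y) (by linarith)
  rw [rpowSecondDiff, abs_of_nonneg (sub_nonneg.2 hyx)]
  linear_combination h₁ + h₂

lemma rpowSecondDiff_le (hα₁ : 1 < α) (hα₂ : α ≤ 2) (hy : 0 < y) {x : ℝ} (hyx : y < x) :
    rpowSecondDiff α y x ≤ 2 * α * (α - 1) * y ^ 2 * (x - y) ^ (α - 2) := by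
  have hxy : 0 < x - y := sub_pos.2 hyx
  have h₁ := mul_rpow_sub_one_mul_sub_le_rpow_sub_rpow hα₁.le (by linarith : 0 < x + y)
    (b := x) (by linarith)
  have h₂ := mul_rpow_sub_one_mul_sub_le_rpow_sub_rpow hα₁.le hxy (b := x) (by linarith)
  have h₃ := rpow_sub_rpow_le_mul_rpow_sub_one_mul_sub (p := α - 1) (by linarith)
    (by linarith) hxy (b := x + y) (by linarith)
  rw [show α - 1 - 1 = α - 2 by ring] at h₃
  rw [rpowSecondDiff, abs_of_pos hxy]
  linear_combination h₁ + h₂ + (α * y) * h₃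

lemma tendsto_rpowSecondDiff_atTop (hα₁ : 1 < α) (hα₂ : α < 2) (hy : 0 < y) :
    Tendsto (rpowSecondDiff α y) atTop (𝓝 0) := by
  have hdecay : Tendsto (fun x => 2 * α * (α - 1) * y ^ 2 * (x - y) ^ (α - 2)) atTop (𝓝 0) := by
    have := ((tendsto_rpow_neg_atTop (by linarith : 0 < 2 - α)).comp
      (tendsto_atTop_add_const_right _ (-y) tendsto_id)).const_mul (2 * α * (α - 1) * y ^ 2)
    simpa [sub_eq_add_neg] using this
  exact tendsto_of_tendsto_of_tendsto_of_le_of_le' tendsto_const_nhds hdecay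
    ((eventually_ge_atTop y).mono fun _ => rpowSecondDiff_nonneg hα₁.le hy)
    ((eventually_gt_atTop y).mono fun _ => rpowSecondDiff_le hα₁ hα₂.le hy)

end

theorem stmt0 (α y : ℝ) (hα1 : 1 < α) (hα2 : α < 2) (hy : 0 < y) :
    (∀ x : ℝ, 0 ≤ x → 0 < |x - y| ^ α + (x + y) ^ α - 2 * x ^ α) ∧
    StrictAntiOn (fun x : ℝ => |x - y| ^ α + (x + y) ^ α - 2 * x ^ α) (Set.Ici 0) ∧
    Tendsto (fun x : ℝ => |x - y| ^ α + (x + y) ^ α - 2 * x ^ α) atTop (nhds 0) := by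
  have hanti := strictAntiOn_rpowSecondDiff hα1 hα2 hy
  have hlim := tendsto_rpowSecondDiff_atTop hα1 hα2 hy
  exact ⟨fun _ hx => hanti.lt_of_tendsto_atTop hlim hx, hanti, hlim⟩
end

section
/- Let α < 0 and define f_α(x,y) := (x-y)^α + (x+y)^α - 2x^α for real x > y > 0. Then f_α(x,y) is positive and satisfies the bound f_α(x,y) < 2α(α-1) y² (x-y)^{α-2}. -/
/-!
Apply the mean value theorem to `t ↦ t ^ α` on `[x - y, x]` and on `[x, x + y]`, and once more
to its derivative between the two intermediate points: this writes `f_α(x, y)` as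
`y * d * α (α - 1) c ^ (α - 2)` with `0 < d < 2y` and `x - y < c`. Since `α < 0`, the factor
`α (α - 1)` is positive and `c ^ (α - 2) < (x - y) ^ (α - 2)`.
-/

open Set

theorem exists_sub_eq_mul_of_hasDerivAt {f f' : ℝ → ℝ} {a b : ℝ} (hab : a < b)
    (hf : ∀ t ∈ Icc a b, HasDerivAt f (f' t) t) :
    ∃ c ∈ Ioo a b, f b - f a = (b - a) * f' c := by
  obtain ⟨c, hc, hslope⟩ := exists_hasDerivAt_eq_slope f f' hab
    (fun t ht => (hf t ht).continuousAt.continuousWithinAt)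
    (fun t ht => hf t (Ioo_subset_Icc_self ht))
  refine ⟨c, hc, ?_⟩
  rw [hslope, mul_div_cancel₀ _ (sub_ne_zero.mpr hab.ne')]

theorem exists_second_difference_eq {f f' f'' : ℝ → ℝ} {a h : ℝ} (hh : 0 < h)
    (hf : ∀ t ∈ Icc (a - h) (a + h), HasDerivAt f (f' t) t)
    (hf' : ∀ t ∈ Icc (a - h) (a + h), HasDerivAt f' (f'' t) t) :
    ∃ d ∈ Ioo 0 (2 * h), ∃ c ∈ Ioo (a - h) (a + h),
      f (a - h) + f (a + h) - 2 * f a = h * d * f'' c := by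
  obtain ⟨c₁, hc₁, hright⟩ :=
    exists_sub_eq_mul_of_hasDerivAt (f := f) (by linarith : a < a + h)
    fun t ht => hf t ⟨by linarith [ht.1], ht.2⟩
  obtain ⟨c₂, hc₂, hleft⟩ :=
    exists_sub_eq_mul_of_hasDerivAt (f := f) (by linarith : a - h < a)
    fun t ht => hf t ⟨ht.1, by linarith [ht.2]⟩
  obtain ⟨c, hc, hmid⟩ := exists_sub_eq_mul_of_hasDerivAt (f := f')
    (hc₂.2.trans hc₁.1) fun t ht =>
      hf' t ⟨by linarith [ht.1, hc₂.1], by linarith [ht.2, hc₁.2]⟩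
  refine ⟨c₁ - c₂, ⟨by linarith [hc₂.2, hc₁.1], by linarith [hc₂.1, hc₁.2]⟩, c,
    ⟨by linarith [hc.1, hc₂.1], by linarith [hc.2, hc₁.2]⟩, ?_⟩
  linear_combination hright - hleft + h * hmid

theorem Real.hasDerivAt_const_mul_rpow_sub_one {α t : ℝ} (ht : 0 < t) :
    HasDerivAt (fun s => α * s ^ (α - 1)) (α * (α - 1) * t ^ (α - 2)) t := by
  refine ((Real.hasDerivAt_rpow_const (p := α - 1) (Or.inl ht.ne')).const_mul α).congr_deriv ?_
  rw [show α - 1 - 1 = α - 2 by ring, mul_assoc]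

theorem stmt1 (α x y : ℝ) (hα : α < 0) (hy : 0 < y) (hxy : y < x) :
    0 < (x - y) ^ α + (x + y) ^ α - 2 * x ^ α ∧
    (x - y) ^ α + (x + y) ^ α - 2 * x ^ α < 2 * α * (α - 1) * y ^ 2 * (x - y) ^ (α - 2) := by
  have hpos : ∀ t ∈ Icc (x - y) (x + y), 0 < t := fun t ht => by linarith [ht.1]
  obtain ⟨d, ⟨hd₀, hd₂⟩, c, hc, hdiff⟩ :=
    exists_second_difference_eq (f := fun t => t ^ α) hy
    (fun t ht => Real.hasDerivAt_rpow_const (Or.inl (hpos t ht).ne'))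
    (fun t ht => Real.hasDerivAt_const_mul_rpow_sub_one (hpos t ht))
  rw [hdiff]
  have hK : 0 < α * (α - 1) := mul_pos_of_neg_of_neg hα (by linarith)
  have hc₀ : 0 < c := hpos c (Ioo_subset_Icc_self hc)
  have hdecr : c ^ (α - 2) < (x - y) ^ (α - 2) :=
    Real.rpow_lt_rpow_of_neg (by linarith) hc.1 (by linarith)
  refine ⟨by positivity, ?_⟩
  calc y * d * (α * (α - 1) * c ^ (α - 2))
      < y * (2 * y) * (α * (α - 1) * (x - y) ^ (α - 2)) := by gcongr
    _ = 2 * α * (α - 1) * y ^ 2 * (x - y) ^ (α - 2) := by ring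
end

section
/- Let H ∈ (1/2,1). For n ≥ 2 and j ≥ 2, let f_j(k) = |k|^{2H−2j} for k ≠ 0 and f_j(0) = 0, and let G be a symmetric sequence with G_n = O(n^{−3}) and ∑_{j∈ℤ}|G_j| < ∞. Then uniformly in j ≥ 2, |(f_j ⋆ G)(n)| = O(n^{2H−4}) as n → ∞. -/
open Filter

set_option maxHeartbeats 1000000

theorem stmt18 (H : ℝ) (hH : H ∈ Set.Ioo (1/2 : ℝ) 1) (G : ℤ → ℝ)
    (hGsym : ∀ n : ℤ, G (-n) = G n)
    (hGO : (fun n : ℕ => G n) =O[atTop] (fun n : ℕ => (n : ℝ) ^ (-3 : ℝ)))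
    (hGsum : Summable (fun j : ℤ => |G j|)) :
    ∃ K : ℝ, ∃ N : ℕ, ∀ j : ℕ, 2 ≤ j → ∀ n : ℕ, N ≤ n →
      |∑' k : ℤ, (if k = 0 then 0 else |(k : ℝ)| ^ (2 * H - 2 * (j : ℝ))) * G ((n : ℤ) - k)|
        ≤ K * (n : ℝ) ^ (2 * H - 4) := by
  obtain ⟨hH1, hH2⟩ := hH
  set S := ∑' j : ℤ, |G j| with hSdef
  have hSnn : 0 ≤ S := tsum_nonneg fun _ => abs_nonneg _
  have hGleS : ∀ m : ℤ, |G m| ≤ S := fun m =>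
    Summable.le_tsum hGsum m fun _ _ => abs_nonneg _
  -- a uniform bound |G m| ≤ C * m ^ (-3) for m ≥ 1
  obtain ⟨C, hC0, hC⟩ :
      ∃ C : ℝ, 0 ≤ C ∧ ∀ m : ℤ, 1 ≤ m → |G m| ≤ C * (m : ℝ) ^ (-3 : ℝ) := by
    rw [Asymptotics.isBigO_iff] at hGO
    obtain ⟨c, hc⟩ := hGO
    rw [eventually_atTop] at hc
    obtain ⟨M0, hM0⟩ := hc
    set M : ℕ := max M0 1 with hMdef
    have hM1 : (1:ℝ) ≤ (M:ℝ) := by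
      have : 1 ≤ M := le_max_right _ _
      exact_mod_cast this
    refine ⟨|c| + S * (M:ℝ) ^ (3:ℝ), by positivity, ?_⟩
    intro m hm
    have hm0 : (0:ℝ) < (m:ℝ) := by exact_mod_cast hm
    have hmpow : (0:ℝ) < (m:ℝ) ^ (-3:ℝ) := Real.rpow_pos_of_pos hm0 _
    by_cases hmM : (M:ℤ) ≤ m
    · -- use the big-O bound
      have hmn : m = ((m.toNat : ℕ) : ℤ) := by
        rw [Int.toNat_of_nonneg (by linarith)]
      have hge : M0 ≤ m.toNat := by
        have : (M:ℤ) ≤ m := hmM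
        have h2 : M ≤ m.toNat := by omega
        exact le_trans (le_max_left _ _) h2
      have hb := hM0 m.toNat hge
      have hcast : ((m.toNat : ℕ) : ℝ) = (m:ℝ) := by exact_mod_cast hmn.symm
      have harg : ((m.toNat : ℕ) : ℤ) = m := hmn.symm
      rw [hcast, harg] at hb
      have : |G m| ≤ c * |(m:ℝ) ^ (-3:ℝ)| := by
        simpa [Real.norm_eq_abs] using hb
      calc |G m| ≤ c * |(m:ℝ) ^ (-3:ℝ)| := this
        _ ≤ |c| * (m:ℝ) ^ (-3:ℝ) := by
            rw [abs_of_pos hmpow]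
            exact mul_le_mul_of_nonneg_right (le_abs_self c) hmpow.le
        _ ≤ (|c| + S * (M:ℝ) ^ (3:ℝ)) * (m:ℝ) ^ (-3:ℝ) := by
            apply mul_le_mul_of_nonneg_right _ hmpow.le
            nlinarith [Real.rpow_nonneg (le_trans zero_le_one hM1) (3:ℝ)]
    · -- small m : use |G m| ≤ S
      push_neg at hmM
      have hmM' : (m:ℝ) ≤ (M:ℝ) := by exact_mod_cast hmM.le
      have key : (1:ℝ) ≤ (M:ℝ) ^ (3:ℝ) * (m:ℝ) ^ (-3:ℝ) := by
        have h1 : (m:ℝ) ^ (3:ℝ) ≤ (M:ℝ) ^ (3:ℝ) :=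
          Real.rpow_le_rpow hm0.le hmM' (by norm_num)
        have h2 : (m:ℝ) ^ (3:ℝ) * (m:ℝ) ^ (-3:ℝ) = 1 := by
          rw [← Real.rpow_add hm0]; norm_num
        nlinarith
      calc |G m| ≤ S := hGleS m
        _ = S * 1 := by ring
        _ ≤ S * ((M:ℝ) ^ (3:ℝ) * (m:ℝ) ^ (-3:ℝ)) :=
            mul_le_mul_of_nonneg_left key hSnn
        _ ≤ (|c| + S * (M:ℝ) ^ (3:ℝ)) * (m:ℝ) ^ (-3:ℝ) := by
            nlinarith [abs_nonneg c]
  -- summability of the comparison sequence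
  have hgsum : Summable (fun k : ℤ => |(k:ℝ)| ^ (2*H-4)) := by
    have h := Real.summable_abs_int_rpow (b := 4 - 2*H) (by linarith)
    have e : (fun k : ℤ => |(k:ℝ)| ^ (2*H-4)) = fun k : ℤ => |(k:ℝ)| ^ (-(4-2*H)) := by
      funext k; congr 1; ring
    rw [e]; exact h
  set A := ∑' k : ℤ, |(k:ℝ)| ^ (2*H-4) with hAdef
  have hAnn : 0 ≤ A := tsum_nonneg fun k => Real.rpow_nonneg (abs_nonneg _) _
  refine ⟨8*C*A + 8*S, 2, ?_⟩
  intro j hj n hn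
  have hn2 : (2:ℝ) ≤ (n:ℝ) := by exact_mod_cast hn
  have hnpos : (0:ℝ) < (n:ℝ) := by linarith
  have hhalf : (0:ℝ) < (n:ℝ)/2 := by linarith
  set z := 2*H - 4 with hzdef
  have hz0 : z ≤ 0 := by rw [hzdef]; linarith
  have hz3 : (-3:ℝ) ≤ z := by rw [hzdef]; linarith
  -- the comparison function b
  set b : ℤ → ℝ := fun k =>
    C * ((n:ℝ)/2) ^ (-3:ℝ) * |(k:ℝ)| ^ z + ((n:ℝ)/2) ^ z * |G ((n:ℤ) - k)| with hbdef
  have hGshift : Summable (fun k : ℤ => |G ((n:ℤ) - k)|) :=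
    ((Equiv.subLeft (n:ℤ)).summable_iff).2 hGsum
  have hb1 : Summable (fun k : ℤ => C * ((n:ℝ)/2) ^ (-3:ℝ) * |(k:ℝ)| ^ z) :=
    hgsum.mul_left _
  have hb2 : Summable (fun k : ℤ => ((n:ℝ)/2) ^ z * |G ((n:ℤ) - k)|) :=
    hGshift.mul_left _
  have hbsum : Summable b := hb1.add hb2
  have hb1nn : ∀ k : ℤ, 0 ≤ C * ((n:ℝ)/2) ^ (-3:ℝ) * |(k:ℝ)| ^ z := fun k => by positivity
  have hb2nn : ∀ k : ℤ, 0 ≤ ((n:ℝ)/2) ^ z * |G ((n:ℤ) - k)| := fun k => by positivity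
  -- pointwise bound
  have hterm : ∀ k : ℤ,
      |(if k = 0 then 0 else |(k : ℝ)| ^ (2 * H - 2 * (j : ℝ))) * G ((n : ℤ) - k)| ≤ b k := by
    intro k
    by_cases hk : k = 0
    · subst hk
      rw [if_pos rfl, zero_mul, abs_zero]
      exact add_nonneg (hb1nn 0) (hb2nn 0)
    rw [if_neg hk, abs_mul]
    have hk1 : (1:ℝ) ≤ |(k:ℝ)| := by
      have : (1:ℤ) ≤ |k| := Int.one_le_abs (by exact_mod_cast hk)
      calc (1:ℝ) ≤ (|k| : ℤ) := by exact_mod_cast this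
        _ = |(k:ℝ)| := by push_cast; ring
    have habs : |(|(k:ℝ)| ^ (2*H-2*(j:ℝ)))| = |(k:ℝ)| ^ (2*H-2*(j:ℝ)) :=
      abs_of_nonneg (Real.rpow_nonneg (abs_nonneg _) _)
    rw [habs]
    have hle : |(k:ℝ)| ^ (2*H-2*(j:ℝ)) ≤ |(k:ℝ)| ^ z := by
      apply Real.rpow_le_rpow_of_exponent_le hk1
      have : (2:ℝ) ≤ (j:ℝ) := by exact_mod_cast hj
      rw [hzdef]; linarith
    by_cases hkn : 2*k ≤ (n:ℤ)
    · -- small k : n - k ≥ n/2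
      have hm1 : (1:ℤ) ≤ (n:ℤ) - k := by omega
      have hmr : (n:ℝ)/2 ≤ (((n:ℤ) - k : ℤ) : ℝ) := by
        have : (2*k : ℝ) ≤ (n:ℝ) := by exact_mod_cast hkn
        push_cast; linarith
      have hGb : |G ((n:ℤ) - k)| ≤ C * ((n:ℝ)/2) ^ (-3:ℝ) := by
        calc |G ((n:ℤ) - k)| ≤ C * ((((n:ℤ) - k : ℤ)) : ℝ) ^ (-3:ℝ) := hC _ hm1
          _ ≤ C * ((n:ℝ)/2) ^ (-3:ℝ) := by
              apply mul_le_mul_of_nonneg_left _ hC0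
              exact Real.rpow_le_rpow_of_nonpos hhalf hmr (by norm_num)
      calc |(k:ℝ)| ^ (2*H-2*(j:ℝ)) * |G ((n:ℤ) - k)|
          ≤ |(k:ℝ)| ^ z * (C * ((n:ℝ)/2) ^ (-3:ℝ)) := by
            apply mul_le_mul hle hGb (abs_nonneg _) (Real.rpow_nonneg (abs_nonneg _) _)
        _ = C * ((n:ℝ)/2) ^ (-3:ℝ) * |(k:ℝ)| ^ z := by ring
        _ ≤ b k := le_add_of_nonneg_right (hb2nn k)
    · -- large k : k > n/2
      push_neg at hkn
      have hkpos : (1:ℤ) ≤ k := by omega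
      have hkr : (n:ℝ)/2 ≤ |(k:ℝ)| := by
        have h1 : ((n:ℤ):ℝ) < ((2*k:ℤ):ℝ) := by exact_mod_cast hkn
        have h2 : (0:ℝ) ≤ ((k:ℤ):ℝ) := by exact_mod_cast (by omega : (0:ℤ) ≤ k)
        push_cast at h1
        rw [abs_of_nonneg h2]
        linarith
      have hle2 : |(k:ℝ)| ^ z ≤ ((n:ℝ)/2) ^ z :=
        Real.rpow_le_rpow_of_nonpos hhalf hkr hz0
      calc |(k:ℝ)| ^ (2*H-2*(j:ℝ)) * |G ((n:ℤ) - k)|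
          ≤ ((n:ℝ)/2) ^ z * |G ((n:ℤ) - k)| :=
            mul_le_mul (hle.trans hle2) le_rfl (abs_nonneg _)
              (Real.rpow_nonneg hhalf.le _)
        _ ≤ b k := le_add_of_nonneg_left (hb1nn k)
  -- summability of the series itself
  have hsum_abs : Summable (fun k : ℤ =>
      |(if k = 0 then 0 else |(k : ℝ)| ^ (2 * H - 2 * (j : ℝ))) * G ((n : ℤ) - k)|) :=
    Summable.of_nonneg_of_le (fun _ => abs_nonneg _) hterm hbsum
  have h1 : |∑' k : ℤ, (if k = 0 then 0 else |(k : ℝ)| ^ (2 * H - 2 * (j : ℝ))) * G ((n : ℤ) - k)|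
      ≤ ∑' k : ℤ, |(if k = 0 then 0 else |(k : ℝ)| ^ (2 * H - 2 * (j : ℝ))) * G ((n : ℤ) - k)| := by
    have h := norm_tsum_le_tsum_norm
      (f := fun k : ℤ => (if k = 0 then 0 else |(k : ℝ)| ^ (2 * H - 2 * (j : ℝ))) * G ((n : ℤ) - k))
      (by simpa only [Real.norm_eq_abs] using hsum_abs)
    simpa only [Real.norm_eq_abs] using h
  have h2 : ∑' k : ℤ, |(if k = 0 then 0 else |(k : ℝ)| ^ (2 * H - 2 * (j : ℝ))) * G ((n : ℤ) - k)|
      ≤ ∑' k : ℤ, b k := Summable.tsum_le_tsum hterm hsum_abs hbsum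
  have h3 : ∑' k : ℤ, b k = C * ((n:ℝ)/2) ^ (-3:ℝ) * A + ((n:ℝ)/2) ^ z * S := by
    rw [hbdef]
    rw [Summable.tsum_add hb1 hb2, tsum_mul_left, tsum_mul_left]
    congr 1
    rw [hSdef]
    congr 1
    exact (Equiv.subLeft (n:ℤ)).tsum_eq (fun m => |G m|)
  -- final arithmetic
  have hnz : (0:ℝ) ≤ (n:ℝ) ^ z := Real.rpow_nonneg hnpos.le _
  have key1 : ((n:ℝ)/2) ^ (-3:ℝ) ≤ 8 * (n:ℝ) ^ z := by
    have e1 : ((n:ℝ)/2) ^ (-3:ℝ) = (n:ℝ) ^ (-3:ℝ) / (2:ℝ) ^ (-3:ℝ) :=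
      Real.div_rpow hnpos.le (by norm_num) _
    have e2 : (2:ℝ) ^ (-3:ℝ) = 1/8 := by
      rw [show (-3:ℝ) = ((-3:ℤ):ℝ) by norm_num, Real.rpow_intCast]
      norm_num
    have e3 : (n:ℝ) ^ (-3:ℝ) ≤ (n:ℝ) ^ z :=
      Real.rpow_le_rpow_of_exponent_le (by linarith) hz3
    rw [e1, e2]
    linarith
  have key2 : ((n:ℝ)/2) ^ z ≤ 8 * (n:ℝ) ^ z := by
    have e1 : ((n:ℝ)/2) ^ z = (n:ℝ) ^ z / (2:ℝ) ^ z :=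
      Real.div_rpow hnpos.le (by norm_num) _
    have e2 : (1/8 : ℝ) ≤ (2:ℝ) ^ z := by
      have : (2:ℝ) ^ (-3:ℝ) ≤ (2:ℝ) ^ z :=
        Real.rpow_le_rpow_of_exponent_le (by norm_num) hz3
      have e : (2:ℝ) ^ (-3:ℝ) = 1/8 := by
        rw [show (-3:ℝ) = ((-3:ℤ):ℝ) by norm_num, Real.rpow_intCast]
        norm_num
      linarith [e ▸ this]
    rw [e1]
    have h2pos : (0:ℝ) < (2:ℝ) ^ z := Real.rpow_pos_of_pos (by norm_num) _
    rw [div_le_iff₀ h2pos]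
    nlinarith
  calc |∑' k : ℤ, (if k = 0 then 0 else |(k : ℝ)| ^ (2 * H - 2 * (j : ℝ))) * G ((n : ℤ) - k)|
      ≤ ∑' k : ℤ, b k := h1.trans h2
    _ = C * ((n:ℝ)/2) ^ (-3:ℝ) * A + ((n:ℝ)/2) ^ z * S := h3
    _ ≤ C * (8 * (n:ℝ) ^ z) * A + (8 * (n:ℝ) ^ z) * S := by
        apply add_le_add
        · exact mul_le_mul_of_nonneg_right (mul_le_mul_of_nonneg_left key1 hC0) hAnn
        · exact mul_le_mul_of_nonneg_right key2 hSnn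
    _ = (8*C*A + 8*S) * (n:ℝ) ^ (2*H-4) := by rw [hzdef]; ring
end
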